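/- A conformal transformation maps unparametrized conformal circles to unparametrized conformal circles: if f: (M,g) → (N,h) satisfies f*h = Ω²g for a positive smooth Ω, and γ is a non-null solution of the conformal circle system for g, then f∘γ is, after associating b̂ = b − d(log Ω), a solution of the conformal circle system for h. -/

import Mathlib

/-!
For a constant metric `g` the Christoffel symbols of `ĝ = Ω²g` are `Γ̂^k_{ij} = S_{ij}^{kl} Υ_l`,
and `Ŝ = S` since the factors `Ω²` and `Ω⁻²` cancel. The `γ''`-equation is linear in `b`, so the
`Γ̂`-term is exactly what replacing `b` by `b̂ = b − Υ` produces. In the `b`-equation,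
`b̂' = b' − dΥ(γ')`, and expanding the quadratic term `½ S(b̂, b̂)` in `b̂ = b − Υ` against the
`Γ̂`-term leaves `−dΥ(γ') + Υ_iΥ(γ') − ½|Υ|² g(γ', ·)`, which is the Schouten term `P̂(γ', ·)`.
-/

open Matrix Finset

variable {ι : Type*} [Fintype ι]

lemma Matrix.IsSymm.dotProduct_mulVec_comm {M : Matrix ι ι ℝ} (h : M.IsSymm) (v w : ι → ℝ) :
    v ⬝ᵥ M *ᵥ w = w ⬝ᵥ M *ᵥ v := by
  rw [dotProduct_mulVec, ← mulVec_transpose, h.eq, dotProduct_comm]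

lemma sum_contract_sub (T : ι → ι → ι → ℝ) (b w u v : ι → ℝ) :
    ∑ j, ∑ k, ∑ l, T j k l * (b - w) l * u j * v k
      = ∑ j, ∑ k, ∑ l, T j k l * b l * u j * v k - ∑ j, ∑ k, (∑ l, T j k l * w l) * u j * v k := by
  simp only [Pi.sub_apply, mul_sub, sub_mul, sum_sub_distrib, sum_mul]

lemma deriv_comp_eq_dotProduct [DecidableEq ι] {F : (ι → ℝ) → ℝ} {γ : ℝ → ι → ℝ} {τ : ℝ}
    (hF : DifferentiableAt ℝ F (γ τ)) (hγ : DifferentiableAt ℝ γ τ) :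
    deriv (fun t => F (γ t)) τ
      = (fun k => fderiv ℝ F (γ τ) (Pi.single k 1)) ⬝ᵥ fun k => deriv (fun s => γ s k) τ := by
  rw [← Function.comp_def, fderiv_comp_deriv τ hF hγ, deriv_pi (differentiableAt_pi.1 hγ)]
  conv_lhs => rw [← univ_sum_single fun k => deriv (fun s => γ s k) τ]
  simp only [map_sum, dotProduct]
  refine sum_congr rfl fun k _ => ?_
  rw [mul_comm, ← smul_eq_mul, ← map_smul, ← Pi.single_smul, smul_eq_mul, mul_one]

lemma differentiable_fderiv_log_apply {E : Type*} [NormedAddCommGroup E] [NormedSpace ℝ E]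
    {Ω : E → ℝ} (hΩ : ContDiff ℝ 2 Ω) (hΩ₀ : ∀ x, Ω x ≠ 0) (v : E) :
    Differentiable ℝ fun x => fderiv ℝ (fun y => Real.log (Ω y)) x v :=
  ((hΩ.log hΩ₀).fderiv_right (m := 1) le_rfl |>.clm_apply contDiff_const).differentiable
    one_ne_zero

section sTensor

variable [DecidableEq ι]

-- `sTensor g ginv i j k l` is `S_{ij}^{kl}`, with `ginv` standing for `g⁻¹`.
def sTensor (g ginv : Matrix ι ι ℝ) (i j k l : ι) : ℝ :=
  (if i = k then 1 else 0) * (if j = l then 1 else 0)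
    + (if i = l then 1 else 0) * (if j = k then 1 else 0) - g i j * ginv k l

variable (g ginv : Matrix ι ι ℝ)

lemma sum_sTensor_mul (w : ι → ℝ) (i j k : ι) :
    ∑ l, sTensor g ginv i j k l * w l
      = (if i = k then w j else 0) + (if j = k then w i else 0) - g i j * (ginv *ᵥ w) k := by
  simp only [sTensor, sub_mul, add_mul, sum_sub_distrib, sum_add_distrib, ite_mul,
    one_mul, zero_mul, mul_assoc, ← mul_sum, sum_ite_eq, mem_univ, if_true]
  split_ifs <;> simp [mulVec, dotProduct]

lemma sum_sTensor_contract (w u c : ι → ℝ) (i : ι) :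
    ∑ j, ∑ k, (∑ l, sTensor g ginv i j k l * w l) * u j * c k
      = c i * (w ⬝ᵥ u) + w i * (u ⬝ᵥ c) - (g *ᵥ u) i * (ginv *ᵥ w ⬝ᵥ c) := by
  have hg : ∑ j, ∑ k, g i j * (ginv *ᵥ w) k * u j * c k = (g *ᵥ u) i * (ginv *ᵥ w ⬝ᵥ c) := by
    simp only [mulVec, dotProduct, sum_mul_sum]
    exact sum_congr rfl fun _ _ => sum_congr rfl fun _ _ => by ring
  simp only [sum_sTensor_mul, add_mul, sub_mul, ite_mul, zero_mul, sum_add_distrib,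
    sum_sub_distrib, sum_ite_eq, mem_univ, if_true, hg]
  rw [← sum_mul]
  simp only [mul_assoc, ← mul_sum, dotProduct]
  ring

lemma sum_sTensor_quadratic (c : ι → ℝ) (k i : ι) :
    ∑ j, ∑ l, c j * c l * sTensor g ginv k i j l = 2 * (c k * c i) - g k i * (c ⬝ᵥ ginv *ᵥ c) := by
  have hg : ∑ j, ∑ l, c j * c l * (g k i * ginv j l) = g k i * (c ⬝ᵥ ginv *ᵥ c) := by
    simp only [mulVec, dotProduct, mul_sum]
    exact sum_congr rfl fun _ _ => sum_congr rfl fun _ _ => by ring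
  simp only [sTensor, mul_add, mul_sub, mul_ite, mul_one, mul_zero, sum_add_distrib,
    sum_sub_distrib, sum_ite_eq, sum_ite_irrel, sum_const_zero, mem_univ, if_true, hg]
  ring

lemma sum_half_sTensor_quadratic_mul (c u : ι → ℝ) (i : ι) :
    ∑ k, ((1/2) * ∑ j, ∑ l, c j * c l * sTensor g ginv k i j l) * u k
      = c i * (c ⬝ᵥ u) - (1/2) * (c ⬝ᵥ ginv *ᵥ c) * (u ᵥ* g) i := by
  simp only [sum_sTensor_quadratic]
  generalize c ⬝ᵥ ginv *ᵥ c = q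
  simp only [vecMul, dotProduct, mul_sum, ← sum_sub_distrib]
  exact sum_congr rfl fun _ _ => by ring

variable {g ginv}

lemma sTensor_b_equation (hg : g.IsSymm) (hginv : ginv.IsSymm) (u b w dw : ι → ℝ) (i : ι) :
    ∑ k, ((1/2) * ∑ j, ∑ l, b j * b l * sTensor g ginv k i j l) * u k - dw ⬝ᵥ u
        - ∑ j, ∑ k, (∑ l, sTensor g ginv i j k l * w l) * u j * (b - w) k
      = ∑ k, ((1/2) * (∑ j, ∑ l, (b - w) j * (b - w) l * sTensor g ginv k i j l)
          + (-dw k + w k * w i - (1/2) * (∑ k, ∑ l, ginv k l * w k * w l) * g k i)) * u k := by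
  have hP : ∑ k, (-dw k + w k * w i - (1/2) * (∑ k, ∑ l, ginv k l * w k * w l) * g k i) * u k
      = -(dw ⬝ᵥ u) + w i * (w ⬝ᵥ u) - (1/2) * (w ⬝ᵥ ginv *ᵥ w) * (u ᵥ* g) i := by
    have hq : ∑ k, ∑ l, ginv k l * w k * w l = w ⬝ᵥ ginv *ᵥ w := by
      simp only [dotProduct, mulVec, mul_sum]
      exact sum_congr rfl fun _ _ => sum_congr rfl fun _ _ => by ring
    rw [hq]
    simp only [vecMul, dotProduct, mul_sum, ← sum_neg_distrib, ← sum_add_distrib,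
      ← sum_sub_distrib]
    exact sum_congr rfl fun _ _ => by ring
  rw [← mulVec_transpose, hg.eq] at hP
  simp only [add_mul, sum_add_distrib, hP, sum_half_sTensor_quadratic_mul, sum_sTensor_contract]
  simp only [← mulVec_transpose, hg.eq, Pi.sub_apply, mulVec_sub, dotProduct_sub, sub_dotProduct,
    hginv.dotProduct_mulVec_comm w b, dotProduct_comm (ginv *ᵥ w), dotProduct_comm u]
  ring

end sTensor

theorem stmt11_general (n : ℕ)
    (g ginv : Matrix (Fin n) (Fin n) ℝ) (hgsymm : g.IsSymm) (hinv : g * ginv = 1)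
    (S : Fin n → Fin n → Fin n → Fin n → ℝ)
    (hS : ∀ i j k l, S i j k l =
      (if i = k then (1:ℝ) else 0) * (if j = l then (1:ℝ) else 0)
      + (if i = l then (1:ℝ) else 0) * (if j = k then (1:ℝ) else 0)
      - g i j * ginv k l)
    (Ω : (Fin n → ℝ) → ℝ) (hΩpos : ∀ x, 0 < Ω x) (hΩsm : ContDiff ℝ (⊤ : ℕ∞) Ω)
    -- Υ = d log Ω
    (Υ : (Fin n → ℝ) → Fin n → ℝ)
    (hΥ : ∀ x j, Υ x j = fderiv ℝ (fun y => Real.log (Ω y)) x (Pi.single j 1))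
    -- Ŝ, the S-tensor of ĝ = Ω² g
    (Shat : (Fin n → ℝ) → Fin n → Fin n → Fin n → Fin n → ℝ)
    (hShat : ∀ x i j k l, Shat x i j k l =
      (if i = k then (1:ℝ) else 0) * (if j = l then (1:ℝ) else 0)
      + (if i = l then (1:ℝ) else 0) * (if j = k then (1:ℝ) else 0)
      - ((Ω x) ^ 2 * g i j) * (((Ω x) ^ 2)⁻¹ * ginv k l))
    -- Christoffel symbols of ĝ (the background g is flat with Γ = 0)
    (Γhat : (Fin n → ℝ) → Fin n → Fin n → Fin n → ℝ)
    (hΓhat : ∀ x k i j, Γhat x k i j =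
      (if i = k then Υ x j else 0) + (if j = k then Υ x i else 0)
        - g i j * ∑ l, ginv k l * Υ x l)
    -- Schouten tensor of ĝ (that of flat g vanishes)
    (Phat : (Fin n → ℝ) → Fin n → Fin n → ℝ)
    (hPhat : ∀ x i j, Phat x i j =
      - fderiv ℝ (fun y => Υ y j) x (Pi.single i 1) + Υ x i * Υ x j
        - (1/2) * (∑ k, ∑ l, ginv k l * Υ x k * Υ x l) * g i j)
    (γ : ℝ → Fin n → ℝ) (hγsm : ContDiff ℝ (⊤ : ℕ∞) γ)
    (b : ℝ → Fin n → ℝ) (hbsm : ContDiff ℝ (⊤ : ℕ∞) b)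
    -- (γ, b) solves the conformal circle system for g (P = 0, Γ = 0)
    (hγeq : ∀ (τ : ℝ) (i : Fin n),
      deriv (fun t => deriv (fun s => γ s i) t) τ
        = - ∑ j, ∑ k, ∑ l,
            S j k i l * b τ l * deriv (fun s => γ s j) τ * deriv (fun s => γ s k) τ)
    (hbeq : ∀ (τ : ℝ) (i : Fin n),
      deriv (fun t => b t i) τ
        = ∑ k, ((1/2) * ∑ j, ∑ l, b τ j * b τ l * S k i j l)
            * deriv (fun s => γ s k) τ)
    (bhat : ℝ → Fin n → ℝ) (hbhat : ∀ τ l, bhat τ l = b τ l - Υ (γ τ) l) :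
    -- (γ, b̂) solves the conformal circle system for ĝ = Ω² g
    (∀ (τ : ℝ) (i : Fin n),
      deriv (fun t => deriv (fun s => γ s i) t) τ
        + ∑ j, ∑ k, Γhat (γ τ) i j k
            * deriv (fun s => γ s j) τ * deriv (fun s => γ s k) τ
        = - ∑ j, ∑ k, ∑ l, Shat (γ τ) j k i l * bhat τ l
            * deriv (fun s => γ s j) τ * deriv (fun s => γ s k) τ)
    ∧ (∀ (τ : ℝ) (i : Fin n),
      deriv (fun t => bhat t i) τ
        - ∑ j, ∑ k, Γhat (γ τ) k i j * deriv (fun s => γ s j) τ * bhat τ k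
        = ∑ k, ((1/2) * (∑ j, ∑ l, bhat τ j * bhat τ l * Shat (γ τ) k i j l)
              + Phat (γ τ) k i)
            * deriv (fun s => γ s k) τ) := by
  have hginv : ginv.IsSymm := by
    rw [← inv_eq_right_inv hinv]
    exact hgsymm.inv
  have hΥdiff : ∀ i, Differentiable ℝ (fun x => Υ x i) := fun i => by
    simpa only [hΥ] using differentiable_fderiv_log_apply
      (hΩsm.of_le (WithTop.coe_le_coe.2 le_top)) (fun x => (hΩpos x).ne') (Pi.single i 1)
  obtain rfl : S = sTensor g ginv := funext fun i => funext fun j => funext fun k =>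
    funext fun l => hS i j k l
  obtain rfl : Shat = fun _ => sTensor g ginv := funext fun x => funext fun i => funext fun j =>
    funext fun k => funext fun l => by
      rw [hShat, mul_mul_mul_comm, mul_inv_cancel₀ (pow_ne_zero 2 (hΩpos x).ne'), one_mul]
      rfl
  obtain rfl : Γhat = fun x k i j => ∑ l, sTensor g ginv i j k l * Υ x l :=
    funext fun x => funext fun k => funext fun i => funext fun j => by
      rw [hΓhat, sum_sTensor_mul]
      rfl
  obtain rfl : Phat = _ := funext fun x => funext fun i => funext fun j => hPhat x i j
  obtain rfl : bhat = fun t => b t - Υ (γ t) := funext fun t => funext fun l => hbhat t l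
  refine ⟨fun τ i => ?_, fun τ i => ?_⟩
  · rw [hγeq τ i, sum_contract_sub]
    ring
  · have hderiv : deriv (fun t => (b t - Υ (γ t)) i) τ = deriv (fun t => b t i) τ
        - (fun k => fderiv ℝ (fun y => Υ y i) (γ τ) (Pi.single k 1))
          ⬝ᵥ fun k => deriv (fun s => γ s k) τ := by
      have hγτ : DifferentiableAt ℝ γ τ := hγsm.differentiable (by simp) τ
      have hΥγ : DifferentiableAt ℝ (fun t => Υ (γ t) i) τ := (hΥdiff i _).comp τ hγτ
      simp only [Pi.sub_apply]
      rw [deriv_fun_sub (differentiableAt_pi.1 (hbsm.differentiable (by simp) τ) i) hΥγ,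
        deriv_comp_eq_dotProduct (hΥdiff i _) hγτ]
    rw [hderiv, hbeq τ i]
    exact sTensor_b_equation hgsymm hginv _ _ _ _ i

/-- A conformal change maps conformal circles to conformal circles (stated for
`M = N = ℝⁿ` with flat background metric `g` — a constant symmetric invertible matrix,
so `Γ = 0`, `P = 0` — and `ĝ = Ω² g`, `f = id`).  If `(γ, b)` solves the conformal
circle system for `g`, then `(γ, b̂)` with `b̂ = b − d(log Ω)∘γ` solves the system for
`ĝ`, whose Christoffel symbols are `Γ̂^k_{ij} = δ_i^k Υ_j + δ_j^k Υ_i − g_{ij} g^{kl}Υ_l`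
and whose Schouten tensor is `P̂_{ij} = −∂_iΥ_j + Υ_iΥ_j − ½ Υ_kΥ^k g_{ij}`, with
`Υ = d log Ω`. -/
theorem stmt11 (n : ℕ) (hn : 3 ≤ n)
    (g ginv : Matrix (Fin n) (Fin n) ℝ) (hgsymm : g.IsSymm) (hinv : g * ginv = 1)
    (S : Fin n → Fin n → Fin n → Fin n → ℝ)
    (hS : ∀ i j k l, S i j k l =
      (if i = k then (1:ℝ) else 0) * (if j = l then (1:ℝ) else 0)
      + (if i = l then (1:ℝ) else 0) * (if j = k then (1:ℝ) else 0)
      - g i j * ginv k l)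
    (Ω : (Fin n → ℝ) → ℝ) (hΩpos : ∀ x, 0 < Ω x) (hΩsm : ContDiff ℝ (⊤ : ℕ∞) Ω)
    -- Υ = d log Ω
    (Υ : (Fin n → ℝ) → Fin n → ℝ)
    (hΥ : ∀ x j, Υ x j = fderiv ℝ (fun y => Real.log (Ω y)) x (Pi.single j 1))
    -- Ŝ, the S-tensor of ĝ = Ω² g
    (Shat : (Fin n → ℝ) → Fin n → Fin n → Fin n → Fin n → ℝ)
    (hShat : ∀ x i j k l, Shat x i j k l =
      (if i = k then (1:ℝ) else 0) * (if j = l then (1:ℝ) else 0)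
      + (if i = l then (1:ℝ) else 0) * (if j = k then (1:ℝ) else 0)
      - ((Ω x) ^ 2 * g i j) * (((Ω x) ^ 2)⁻¹ * ginv k l))
    -- Christoffel symbols of ĝ (the background g is flat with Γ = 0)
    (Γhat : (Fin n → ℝ) → Fin n → Fin n → Fin n → ℝ)
    (hΓhat : ∀ x k i j, Γhat x k i j =
      (if i = k then Υ x j else 0) + (if j = k then Υ x i else 0)
        - g i j * ∑ l, ginv k l * Υ x l)
    -- Schouten tensor of ĝ (that of flat g vanishes)
    (Phat : (Fin n → ℝ) → Fin n → Fin n → ℝ)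
    (hPhat : ∀ x i j, Phat x i j =
      - fderiv ℝ (fun y => Υ y j) x (Pi.single i 1) + Υ x i * Υ x j
        - (1/2) * (∑ k, ∑ l, ginv k l * Υ x k * Υ x l) * g i j)
    (γ : ℝ → Fin n → ℝ) (hγsm : ContDiff ℝ (⊤ : ℕ∞) γ)
    (b : ℝ → Fin n → ℝ) (hbsm : ContDiff ℝ (⊤ : ℕ∞) b)
    -- γ is non-null
    (hnonnull : ∀ τ : ℝ,
      (∑ i, ∑ j, g i j * deriv (fun s => γ s i) τ * deriv (fun s => γ s j) τ) ≠ 0)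
    -- (γ, b) solves the conformal circle system for g (P = 0, Γ = 0)
    (hγeq : ∀ (τ : ℝ) (i : Fin n),
      deriv (fun t => deriv (fun s => γ s i) t) τ
        = - ∑ j, ∑ k, ∑ l,
            S j k i l * b τ l * deriv (fun s => γ s j) τ * deriv (fun s => γ s k) τ)
    (hbeq : ∀ (τ : ℝ) (i : Fin n),
      deriv (fun t => b t i) τ
        = ∑ k, ((1/2) * ∑ j, ∑ l, b τ j * b τ l * S k i j l)
            * deriv (fun s => γ s k) τ)
    (bhat : ℝ → Fin n → ℝ) (hbhat : ∀ τ l, bhat τ l = b τ l - Υ (γ τ) l) :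
    -- (γ, b̂) solves the conformal circle system for ĝ = Ω² g
    (∀ (τ : ℝ) (i : Fin n),
      deriv (fun t => deriv (fun s => γ s i) t) τ
        + ∑ j, ∑ k, Γhat (γ τ) i j k
            * deriv (fun s => γ s j) τ * deriv (fun s => γ s k) τ
        = - ∑ j, ∑ k, ∑ l, Shat (γ τ) j k i l * bhat τ l
            * deriv (fun s => γ s j) τ * deriv (fun s => γ s k) τ)
    ∧ (∀ (τ : ℝ) (i : Fin n),
      deriv (fun t => bhat t i) τ
        - ∑ j, ∑ k, Γhat (γ τ) k i j * deriv (fun s => γ s j) τ * bhat τ k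
        = ∑ k, ((1/2) * (∑ j, ∑ l, bhat τ j * bhat τ l * Shat (γ τ) k i j l)
              + Phat (γ τ) k i)
            * deriv (fun s => γ s k) τ) :=
  stmt11_general n g ginv hgsymm hinv S hS Ω hΩpos hΩsm Υ hΥ Shat hShat Γhat hΓhat Phat hPhat γ hγsm
    b hbsm hγeq hbeq bhat hbhat
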